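/- arXiv:2010.01439 — 5 statements merged into one kernel-verified Lean document; each statement's English description precedes it below -/
import Mathlib

section
/- The burning number of a path on n vertices equals the ceiling of the square root of n. -/
open SimpleGraph Finset

/-- `burnsBy G x` says that the burning sequence `x = (x 0, …, x (k-1))` burns the
graph `G` completely: the fire source `x i`, lit in round `i + 1`, burns every vertex
within distance `k - 1 - i` of it by the end of round `k`, and every vertex of `G` is
burned by some fire source. -/
def burnsBy {V : Type*} (G : SimpleGraph V) {k : ℕ} (x : Fin k → V) : Prop :=
  ∀ v : V, ∃ i : Fin k, G.Reachable (x i) v ∧ G.dist (x i) v ≤ k - 1 - i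

/-- The burning number of a graph: the least length of a burning sequence. -/
noncomputable def burningNumber {V : Type*} (G : SimpleGraph V) : ℕ :=
  sInf {k : ℕ | ∃ x : Fin k → V, burnsBy G x}

/-- Any walk in the path graph has length at least the distance between the endpoints. -/
private lemma pg_walk_len {n : ℕ} {u v : Fin n} (p : (SimpleGraph.pathGraph n).Walk u v) :
    ((u : ℤ) - (v : ℤ)).natAbs ≤ p.length := by
  induction p with
  | nil => simp
  | @cons a b c h p ih =>
    rw [pathGraph_adj] at h
    rw [SimpleGraph.Walk.length_cons]
    omega

/-- There is a walk of length `v - u` between `u ≤ v` in the path graph. -/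
private lemma pg_walk_exists {n : ℕ} : ∀ (d : ℕ) (u v : Fin n), v.val = u.val + d →
    ∃ p : (SimpleGraph.pathGraph n).Walk u v, p.length = d := by
  intro d
  induction d with
  | zero =>
    intro u v h
    have : u = v := Fin.ext (by omega)
    subst this
    exact ⟨SimpleGraph.Walk.nil, rfl⟩
  | succ d ih =>
    intro u v h
    have hu1 : u.val + 1 < n := by have := v.isLt; omega
    set u' : Fin n := ⟨u.val + 1, hu1⟩ with hu'
    have hadj : (SimpleGraph.pathGraph n).Adj u u' := pathGraph_adj.mpr (Or.inl rfl)
    obtain ⟨p, hp⟩ := ih u' v (by simp [hu']; omega)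
    exact ⟨SimpleGraph.Walk.cons hadj p, by simp [hp]⟩

/-- Distance formula in the path graph. -/
private lemma pg_dist {n : ℕ} (u v : Fin n) :
    (SimpleGraph.pathGraph n).dist u v = ((u : ℤ) - (v : ℤ)).natAbs := by
  apply le_antisymm
  · rcases le_total u.val v.val with hle | hle
    · obtain ⟨p, hp⟩ := pg_walk_exists (v.val - u.val) u v (by omega)
      have := SimpleGraph.dist_le p
      omega
    · obtain ⟨p, hp⟩ := pg_walk_exists (u.val - v.val) v u (by omega)
      rw [SimpleGraph.dist_comm]
      have := SimpleGraph.dist_le p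
      omega
  · obtain ⟨p, hp⟩ :=
      (SimpleGraph.pathGraph_preconnected n u v).exists_walk_length_eq_dist
    have := pg_walk_len p
    omega

private lemma sum_odd (k : ℕ) : ∑ j ∈ Finset.range k, (2 * j + 1) = k ^ 2 := by
  induction k with
  | zero => simp
  | succ k ih => rw [Finset.sum_range_succ, ih]; ring

/-- The counting lower bound: a burning sequence of length `k` needs `n ≤ k²`. -/
private lemma burn_count {n k : ℕ} (x : Fin k → Fin n)
    (hx : burnsBy (SimpleGraph.pathGraph n) x) : n ≤ k ^ 2 := by
  classical
  have cover : (Finset.univ : Finset (Fin n)) ⊆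
      Finset.univ.biUnion (fun i : Fin k =>
        Finset.univ.filter fun v =>
          (SimpleGraph.pathGraph n).dist (x i) v ≤ k - 1 - (i : ℕ)) := by
    intro v _
    obtain ⟨i, _, hd⟩ := hx v
    exact Finset.mem_biUnion.mpr ⟨i, Finset.mem_univ i, by simpa using hd⟩
  have hcard : n ≤ ∑ i : Fin k,
      (Finset.univ.filter fun v =>
        (SimpleGraph.pathGraph n).dist (x i) v ≤ k - 1 - (i : ℕ)).card := by
    calc n = (Finset.univ : Finset (Fin n)).card := by simp
    _ ≤ _ := le_trans (Finset.card_le_card cover) (Finset.card_biUnion_le)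
  have hball : ∀ i : Fin k,
      (Finset.univ.filter fun v =>
        (SimpleGraph.pathGraph n).dist (x i) v ≤ k - 1 - (i : ℕ)).card
      ≤ 2 * (k - 1 - (i : ℕ)) + 1 := by
    intro i
    set r := k - 1 - (i : ℕ)
    set c := (x i).val
    have : ((Finset.univ.filter fun v =>
        (SimpleGraph.pathGraph n).dist (x i) v ≤ r)).card
        ≤ (Finset.Icc (c - r) (c + r)).card := by
      apply Finset.card_le_card_of_injOn (fun v => v.val)
      · intro v hv
        simp only [Finset.mem_coe, Finset.mem_filter, Finset.mem_univ, true_and] at hv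
        rw [pg_dist] at hv
        simp only [Finset.mem_coe, Finset.mem_Icc]
        omega
      · exact fun a _ b _ h => Fin.ext h
    rw [Nat.card_Icc] at this
    omega
  have hsum : ∑ i : Fin k, (2 * (k - 1 - (i : ℕ)) + 1) = k ^ 2 := by
    rw [Fin.sum_univ_eq_sum_range (fun j => 2 * (k - 1 - j) + 1) k]
    calc ∑ i ∈ Finset.range k, (2 * (k - 1 - i) + 1)
        = ∑ j ∈ Finset.range k, (2 * j + 1) :=
          Finset.sum_range_reflect (fun j => 2 * j + 1) k
      _ = k ^ 2 := sum_odd k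
  calc n ≤ _ := hcard
    _ ≤ ∑ i : Fin k, (2 * (k - 1 - (i : ℕ)) + 1) := Finset.sum_le_sum fun i _ => hball i
    _ = k ^ 2 := hsum

private lemma exists_step (f : ℕ → ℕ) : ∀ (k v : ℕ), f 0 ≤ v → v < f k →
    ∃ i, i < k ∧ f i ≤ v ∧ v < f (i + 1) := by
  intro k
  induction k with
  | zero => intro v h0 h; omega
  | succ k ih =>
    intro v h0 h
    by_cases hv : v < f k
    · obtain ⟨i, h1, h2, h3⟩ := ih v h0 hv
      exact ⟨i, by omega, h2, h3⟩
    · exact ⟨k, by omega, by omega, h⟩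

/-- Construction of a burning sequence of length `k` whenever `n ≤ k²`. -/
private lemma burn_construct {n k : ℕ} (hn : 0 < n) (hk : n ≤ k ^ 2) :
    ∃ x : Fin k → Fin n, burnsBy (SimpleGraph.pathGraph n) x := by
  set s : ℕ → ℕ := fun i => i * (2 * k - i) with hs
  refine ⟨fun i => ⟨min (s i + (k - 1 - i)) (n - 1), by omega⟩, ?_⟩
  intro v
  have hv0 : s 0 ≤ v.val := by simp [hs]
  have hvk : v.val < s k := by
    have := v.isLt
    have : s k = k ^ 2 := by
      show k * (2 * k - k) = k ^ 2
      rw [show 2 * k - k = k by omega]; ring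
    omega
  obtain ⟨i, hik, h1, h2⟩ := exists_step s k v.val hv0 hvk
  have hstep : s (i + 1) = s i + (2 * (k - 1 - i) + 1) := by
    obtain ⟨r, hr⟩ : ∃ r, k = i + r + 1 := ⟨k - i - 1, by omega⟩
    simp only [hs, hr]
    have h1 : i + r + 1 - 1 - i = r := by omega
    have h2 : 2 * (i + r + 1) - i = i + 2 * r + 2 := by omega
    have h3 : 2 * (i + r + 1) - (i + 1) = i + 2 * r + 1 := by omega
    rw [h1, h2, h3]
    ring
  refine ⟨⟨i, hik⟩, SimpleGraph.pathGraph_preconnected n _ _, ?_⟩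
  rw [pg_dist]
  simp only
  have hvn : v.val ≤ n - 1 := by have := v.isLt; omega
  omega

/-- The burning number of a path on `n` vertices equals `⌈√n⌉`. -/
theorem burningNumber_pathGraph (n : ℕ) :
    burningNumber (SimpleGraph.pathGraph n) = ⌈Real.sqrt n⌉₊ := by
  set m := ⌈Real.sqrt n⌉₊ with hm
  have hnm : n ≤ m ^ 2 := by
    have h1 : Real.sqrt n ≤ (m : ℝ) := Nat.le_ceil _
    have h2 : (n : ℝ) ≤ (m : ℝ) ^ 2 := by
      have := Real.sq_sqrt (by positivity : (0 : ℝ) ≤ (n : ℝ))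
      nlinarith [Real.sqrt_nonneg (n : ℝ)]
    exact_mod_cast h2
  have hmem : m ∈ {k : ℕ | ∃ x : Fin k → Fin n, burnsBy (SimpleGraph.pathGraph n) x} := by
    rcases Nat.eq_zero_or_pos n with h0 | h0
    · subst h0
      have : m = 0 := by simp [hm]
      rw [this]
      exact ⟨Fin.elim0 ∘ Fin.cast rfl, fun v => v.elim0⟩
    · exact burn_construct h0 hnm
  have hlb : ∀ j ∈ {k : ℕ | ∃ x : Fin k → Fin n, burnsBy (SimpleGraph.pathGraph n) x},
      m ≤ j := by
    intro j hj
    obtain ⟨x, hx⟩ := hj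
    have hcount : n ≤ j ^ 2 := burn_count x hx
    rw [hm]
    rw [Nat.ceil_le]
    calc Real.sqrt n ≤ Real.sqrt ((j : ℝ) ^ 2) := by
          apply Real.sqrt_le_sqrt
          exact_mod_cast hcount
      _ = (j : ℝ) := Real.sqrt_sq (by positivity)
  apply le_antisymm
  · exact Nat.sInf_le hmem
  · exact hlb _ (Nat.sInf_mem ⟨m, hmem⟩)
end

section
/- For the spider graph SP(s, r) with s arms each of length r, if s >= r then the burning number of SP(s, r) equals r + 1. -/
/-- The spider graph `SP(s, r)`: a head vertex `none` joined to `s` arms, each arm a path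
of `r` vertices; `some (a, j)` is the vertex at distance `j + 1` from the head on arm `a`. -/
def spider (s r : ℕ) : SimpleGraph (Option (Fin s × Fin r)) :=
  SimpleGraph.fromRel (fun u v =>
    (∃ (a : Fin s) (j : Fin r), u = none ∧ v = some (a, j) ∧ (j : ℕ) = 0) ∨
    (∃ (a : Fin s) (j j' : Fin r), u = some (a, j) ∧ v = some (a, j') ∧
      (j' : ℕ) = (j : ℕ) + 1))

namespace SpiderAux

/-- A 1-Lipschitz potential bounds walk lengths from below. -/
lemma walk_pot {V : Type*} {G : SimpleGraph V} (f : V → ℤ)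
    (hf : ∀ ⦃u v⦄, G.Adj u v → |f u - f v| ≤ 1) :
    ∀ {u v : V} (p : G.Walk u v), |f u - f v| ≤ (p.length : ℤ) := by
  intro u v p
  induction p with
  | nil => simp
  | @cons u v w h p ih =>
    calc |f u - f w| ≤ |f u - f v| + |f v - f w| := abs_sub_le _ _ _
    _ ≤ 1 + (p.length : ℤ) := add_le_add (hf h) ih
    _ = (((SimpleGraph.Walk.cons h p).length : ℕ) : ℤ) := by
        simp [SimpleGraph.Walk.length_cons]; ring

lemma reach_pot {V : Type*} {G : SimpleGraph V} (f : V → ℤ)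
    (hf : ∀ ⦃u v⦄, G.Adj u v → |f u - f v| ≤ 1) {u v : V} (h : G.Reachable u v) :
    |f u - f v| ≤ (G.dist u v : ℤ) := by
  obtain ⟨p, hp⟩ := h.exists_walk_length_eq_dist
  rw [← hp]
  exact walk_pot f hf p

/-- Depth potential. -/
def dep (s r : ℕ) : Option (Fin s × Fin r) → ℤ
  | none => 0
  | some (_, j) => (j : ℤ) + 1

/-- Signed depth potential relative to arm `a`. -/
def pot (s r : ℕ) (a : Fin s) : Option (Fin s × Fin r) → ℤ
  | none => 0
  | some (b, j) => if b = a then (j : ℤ) + 1 else -((j : ℤ) + 1)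

lemma adj_cases {s r : ℕ} {u v : Option (Fin s × Fin r)} (h : (spider s r).Adj u v) :
    (∃ (a : Fin s) (j : Fin r), (j : ℕ) = 0 ∧
      ((u = none ∧ v = some (a, j)) ∨ (v = none ∧ u = some (a, j)))) ∨
    (∃ (a : Fin s) (j j' : Fin r), (j' : ℕ) = (j : ℕ) + 1 ∧
      ((u = some (a, j) ∧ v = some (a, j')) ∨ (v = some (a, j) ∧ u = some (a, j')))) := by
  rw [spider, SimpleGraph.fromRel_adj] at h
  obtain ⟨-, h | h⟩ := h <;>
    rcases h with ⟨a, j, h1, h2, h3⟩ | ⟨a, j, j', h1, h2, h3⟩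
  · exact Or.inl ⟨a, j, h3, Or.inl ⟨h1, h2⟩⟩
  · exact Or.inr ⟨a, j, j', h3, Or.inl ⟨h1, h2⟩⟩
  · exact Or.inl ⟨a, j, h3, Or.inr ⟨h1, h2⟩⟩
  · exact Or.inr ⟨a, j, j', h3, Or.inr ⟨h1, h2⟩⟩

lemma dep_adj {s r : ℕ} : ∀ ⦃u v : Option (Fin s × Fin r)⦄,
    (spider s r).Adj u v → |dep s r u - dep s r v| ≤ 1 := by
  intro u v h
  rcases adj_cases h with ⟨a, j, hj, ⟨h1, h2⟩ | ⟨h1, h2⟩⟩ |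
    ⟨a, j, j', hj, ⟨h1, h2⟩ | ⟨h1, h2⟩⟩ <;> subst h1 <;> subst h2 <;>
    simp only [dep] <;> rw [abs_le] <;> constructor <;> omega

lemma pot_adj {s r : ℕ} (c : Fin s) : ∀ ⦃u v : Option (Fin s × Fin r)⦄,
    (spider s r).Adj u v → |pot s r c u - pot s r c v| ≤ 1 := by
  intro u v h
  rcases adj_cases h with ⟨a, j, hj, ⟨h1, h2⟩ | ⟨h1, h2⟩⟩ |
    ⟨a, j, j', hj, ⟨h1, h2⟩ | ⟨h1, h2⟩⟩ <;> subst h1 <;> subst h2 <;>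
    simp only [pot] <;> split_ifs <;> rw [abs_le] <;> constructor <;> omega

lemma exists_walk (s r : ℕ) (a : Fin s) :
    ∀ (n : ℕ) (j : Fin r), (j : ℕ) = n →
      ∃ p : (spider s r).Walk none (some (a, j)), p.length = n + 1 := by
  intro n
  induction n with
  | zero =>
    intro j hj
    have hadj : (spider s r).Adj none (some (a, j)) := by
      rw [spider, SimpleGraph.fromRel_adj]
      exact ⟨by simp, Or.inl (Or.inl ⟨a, j, rfl, rfl, hj⟩)⟩
    exact ⟨SimpleGraph.Walk.cons hadj SimpleGraph.Walk.nil, rfl⟩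
  | succ n ih =>
    intro j hj
    have hn : n < r := by omega
    obtain ⟨p, hp⟩ := ih ⟨n, hn⟩ rfl
    have hadj : (spider s r).Adj (some (a, ⟨n, hn⟩)) (some (a, j)) := by
      rw [spider, SimpleGraph.fromRel_adj]
      refine ⟨?_, Or.inl (Or.inr ⟨a, ⟨n, hn⟩, j, rfl, rfl, by simp [hj]⟩)⟩
      simp only [ne_eq, Option.some.injEq, Prod.mk.injEq, true_and]
      intro hjj
      have : n = (j : ℕ) := congrArg Fin.val hjj
      omega
    exact ⟨p.concat hadj, by rw [SimpleGraph.Walk.length_concat, hp]⟩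

lemma head_reach (s r : ℕ) (v : Option (Fin s × Fin r)) :
    (spider s r).Reachable none v ∧ (spider s r).dist none v ≤ r := by
  match v with
  | none =>
    refine ⟨SimpleGraph.Reachable.refl _, ?_⟩
    rw [SimpleGraph.dist_self]
    exact Nat.zero_le r
  | some (a, j) =>
    obtain ⟨p, hp⟩ := exists_walk s r a (j : ℕ) j rfl
    refine ⟨p.reachable, ?_⟩
    have h1 := SimpleGraph.dist_le p
    have h2 := j.isLt
    omega

/-- The square case: `SP(r, r)` cannot be burnt in `r` steps. -/
lemma no_burn_sq (r : ℕ) (hr1 : 0 < r) (x : Fin r → Option (Fin r × Fin r)) :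
    ¬ burnsBy (spider r r) x := by
  intro hb
  have hrlt : r - 1 < r := by omega
  set leaf : Fin r → Option (Fin r × Fin r) := fun a => some (a, ⟨r - 1, hrlt⟩) with hleaf
  choose L hL using fun a => hb (leaf a)
  -- each source burns at most one leaf
  have hinj : Function.Injective L := by
    intro a b hab
    by_contra hne
    have h1a := (hL a).1
    have h2a := (hL a).2
    rw [hab] at h1a h2a
    obtain ⟨p, hp⟩ := h1a.exists_walk_length_eq_dist
    obtain ⟨q, hq⟩ := (hL b).1.exists_walk_length_eq_dist
    have hpot := walk_pot (pot r r a) (pot_adj a) (p.reverse.append q)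
    rw [SimpleGraph.Walk.length_append, SimpleGraph.Walk.length_reverse, hp, hq] at hpot
    have hva : pot r r a (leaf a) = ((r - 1 : ℕ) : ℤ) + 1 := by
      simp [hleaf, pot]
    have hne' : b ≠ a := fun h => hne h.symm
    have hvb : pot r r a (leaf b) = -(((r - 1 : ℕ) : ℤ) + 1) := by
      simp [hleaf, pot, hne']
    rw [hva, hvb] at hpot
    have h2b := (hL b).2
    have hia : (L b : ℕ) < r := (L b).isLt
    rw [abs_le] at hpot
    omega
  have hsur : Function.Surjective L := Finite.injective_iff_surjective.mp hinj
  choose A hA using hsur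
  have hAinj : Function.Injective A := by
    intro i j hij
    rw [← hA i, ← hA j, hij]
  -- each source sits on its own arm, at depth at least `i + 1`
  have key : ∀ i : Fin r, ∃ j : Fin r, x i = some (A i, j) ∧ (i : ℕ) ≤ (j : ℕ) := by
    intro i
    have h1 := (hL (A i)).1
    have h2 := (hL (A i)).2
    rw [hA i] at h1 h2
    have hpot := reach_pot (pot r r (A i)) (pot_adj (A i)) h1
    have hval : pot r r (A i) (leaf (A i)) = ((r - 1 : ℕ) : ℤ) + 1 := by
      simp [hleaf, pot]
    rw [hval] at hpot
    have hdz : ((spider r r).dist (x i) (leaf (A i)) : ℤ) ≤ ((r - 1 - (i : ℕ) : ℕ) : ℤ) := by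
      exact_mod_cast h2
    have hik := i.isLt
    match hx : x i with
    | none =>
      rw [hx] at hpot hdz
      simp only [pot] at hpot
      rw [abs_le] at hpot
      omega
    | some (b, j) =>
      rw [hx] at hpot hdz
      simp only [pot] at hpot
      have hjk := j.isLt
      by_cases hba : b = A i
      · subst hba
        rw [if_pos rfl, abs_le] at hpot
        exact ⟨j, rfl, by omega⟩
      · rw [if_neg hba, abs_le] at hpot
        omega
  rcases Nat.lt_or_ge r 2 with hk2 | hk2
  · -- r = 1 : the head is unburnt
    obtain ⟨i, hre, hdist⟩ := hb none
    obtain ⟨j, hxj, -⟩ := key i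
    have hpot := reach_pot (dep r r) dep_adj hre
    rw [hxj] at hpot
    simp only [dep] at hpot
    rw [abs_le] at hpot
    have hik := i.isLt
    have hdz : ((spider r r).dist (x i) none : ℤ) ≤ ((r - 1 - (i : ℕ) : ℕ) : ℤ) := by
      exact_mod_cast hdist
    rw [hxj] at hdz
    omega
  · -- r ≥ 2 : the vertex at depth r-1 on the arm of the last source is unburnt
    have hlast : r - 1 < r := by omega
    have hd2 : r - 2 < r := by omega
    set last : Fin r := ⟨r - 1, hlast⟩ with hlastdef
    set v : Option (Fin r × Fin r) := some (A last, ⟨r - 2, hd2⟩) with hv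
    obtain ⟨i, hre, hdist⟩ := hb v
    obtain ⟨j, hxj, hij⟩ := key i
    have hdz : ((spider r r).dist (x i) v : ℤ) ≤ ((r - 1 - (i : ℕ) : ℕ) : ℤ) := by
      exact_mod_cast hdist
    rw [hxj] at hdz
    have hjk := j.isLt
    have hik := i.isLt
    by_cases hi : i = last
    · -- the last source is a leaf at depth r, but v is at depth r-1
      have hival : (i : ℕ) = r - 1 := by rw [hi]
      have hpot := reach_pot (dep r r) dep_adj hre
      have hdv : dep r r v = ((r - 2 : ℕ) : ℤ) + 1 := by rw [hv]; simp [dep]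
      rw [hxj, hdv] at hpot
      simp only [dep] at hpot
      rw [abs_le] at hpot
      omega
    · -- other sources are on other arms, too far from v
      have hAne : A i ≠ A last := fun h => hi (hAinj h)
      have hpot := reach_pot (pot r r (A last)) (pot_adj (A last)) hre
      have hpv : pot r r (A last) v = ((r - 2 : ℕ) : ℤ) + 1 := by rw [hv]; simp [pot]
      rw [hxj, hpv] at hpot
      simp only [pot, if_neg hAne] at hpot
      rw [abs_le] at hpot
      omega

/-- No burning sequence of length `k ≤ r` for `SP(s, r)` when `r ≤ s`. -/
lemma no_burn (s r k : ℕ) (hs : r ≤ s) (hk : k ≤ r) (x : Fin k → Option (Fin s × Fin r)) :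
    ¬ burnsBy (spider s r) x := by
  intro hb
  rcases Nat.eq_zero_or_pos k with hk0 | hk1
  · subst hk0
    obtain ⟨i, -⟩ := hb none
    exact i.elim0
  have hr1 : 0 < r := lt_of_lt_of_le hk1 hk
  have hrlt : r - 1 < r := by omega
  set leaf : Fin s → Option (Fin s × Fin r) := fun a => some (a, ⟨r - 1, hrlt⟩) with hleaf
  choose L hL using fun a => hb (leaf a)
  have hinj : Function.Injective L := by
    intro a b hab
    by_contra hne
    have h1a := (hL a).1
    have h2a := (hL a).2
    rw [hab] at h1a h2a
    obtain ⟨p, hp⟩ := h1a.exists_walk_length_eq_dist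
    obtain ⟨q, hq⟩ := (hL b).1.exists_walk_length_eq_dist
    have hpot := walk_pot (pot s r a) (pot_adj a) (p.reverse.append q)
    rw [SimpleGraph.Walk.length_append, SimpleGraph.Walk.length_reverse, hp, hq] at hpot
    have hva : pot s r a (leaf a) = ((r - 1 : ℕ) : ℤ) + 1 := by
      simp [hleaf, pot]
    have hne' : b ≠ a := fun h => hne h.symm
    have hvb : pot s r a (leaf b) = -(((r - 1 : ℕ) : ℤ) + 1) := by
      simp [hleaf, pot, hne']
    rw [hva, hvb] at hpot
    have h2b := (hL b).2
    have hia : (L b : ℕ) < k := (L b).isLt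
    rw [abs_le] at hpot
    omega
  have hsk : s ≤ k := by
    simpa using Fintype.card_le_of_injective L hinj
  obtain rfl : k = r := by omega
  obtain rfl : s = k := by omega
  exact no_burn_sq _ (by omega) x hb

end SpiderAux

/-- For the spider graph `SP(s, r)` with `s ≥ r`, the burning number equals `r + 1`. -/
theorem burningNumber_spider (s r : ℕ) (hs : r ≤ s) :
    burningNumber (spider s r) = r + 1 := by
  have hmem : (r + 1) ∈ {k : ℕ | ∃ x : Fin k → Option (Fin s × Fin r), burnsBy (spider s r) x} := by
    refine ⟨fun _ => none, fun v => ⟨⟨0, by omega⟩, ?_, ?_⟩⟩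
    · exact (SpiderAux.head_reach s r v).1
    · have := (SpiderAux.head_reach s r v).2
      simpa using this
  refine le_antisymm (Nat.sInf_le hmem) (le_csInf ⟨r + 1, hmem⟩ ?_)
  rintro k ⟨x, hx⟩
  by_contra hlt
  exact SpiderAux.no_burn s r k hs (by omega) x hx
end

section
/- For the spider graph SP(s, r) with s >= r + 2, every burning sequence of length r + 1 that burns SP(s, r) must place its first fire source on the spider head. -/
def phi {s r : ℕ} (a : Fin s) : Option (Fin s × Fin r) → ℕ
  | none => r
  | some (c, j) => if c = a then r - 1 - (j : ℕ) else r + (j : ℕ) + 1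

lemma phi_adj {s r : ℕ} (a : Fin s) {u v : Option (Fin s × Fin r)}
    (h : (spider s r).Adj u v) : phi a u ≤ phi a v + 1 := by
  rcases h with ⟨-, h | h⟩ <;>
  · rcases h with ⟨b, j, rfl, rfl, hj⟩ | ⟨b, j, j', rfl, rfl, hj⟩ <;>
    · simp only [phi]
      have := j.2
      split_ifs <;> omega

lemma phi_walk {s r : ℕ} (a : Fin s) {u v : Option (Fin s × Fin r)}
    (p : (spider s r).Walk u v) : phi a u ≤ p.length + phi a v := by
  induction p with
  | nil => simp
  | cons h p ih =>
    have := phi_adj a h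
    simp only [SimpleGraph.Walk.length_cons]
    omega

lemma phi_le_dist {s r : ℕ} (a : Fin s) {u v : Option (Fin s × Fin r)}
    (h : (spider s r).Reachable u v) :
    phi a u ≤ (spider s r).dist u v + phi a v := by
  obtain ⟨p, hp⟩ := h.exists_walk_length_eq_dist
  simpa [hp] using phi_walk a p

/-- For the spider graph `SP(s, r)` with `s ≥ r + 2`, every burning sequence of length
`r + 1` that burns the whole spider must place its first fire source on the head. -/
theorem spider_first_fire_source_head (s r : ℕ) (hs : r + 2 ≤ s)
    (x : Fin (r + 1) → Option (Fin s × Fin r)) (hx : burnsBy (spider s r) x) :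
    x 0 = none := by
  rcases h0 : x 0 with _ | ⟨a0, j0⟩
  · rfl
  exfalso
  have hr : 1 ≤ r := j0.pos
  set ℓ : Fin s → Option (Fin s × Fin r) := fun a => some (a, ⟨r - 1, by omega⟩) with hℓ
  have hphi : ∀ a, phi a (ℓ a) = 0 := by
    intro a; simp [hℓ, phi]
  choose F hF1 hF2 using fun a => hx (ℓ a)
  have hcard : Fintype.card (Fin (r + 1)) < Fintype.card (Fin s) := by simp; omega
  obtain ⟨a, b, hab, hFab⟩ := Fintype.exists_ne_map_eq_of_card_lt F hcard
  have key : ∀ c, phi c (x (F c)) ≤ r - ((F c : ℕ)) := by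
    intro c
    have h1 := phi_le_dist c (hF1 c)
    have h2 := hF2 c
    rw [hphi c] at h1
    omega
  have hda := key a
  have hdb := key b
  rw [← hFab] at hdb
  have hile : ((F a : ℕ)) ≤ r := by omega
  rcases hxi : x (F a) with _ | ⟨c, j⟩
  · rw [hxi] at hda
    simp only [phi] at hda
    have hz : F a = 0 := Fin.ext (by simp only [Fin.val_zero]; omega)
    rw [hz] at hxi
    rw [hxi] at h0
    exact nomatch h0
  · rw [hxi] at hda hdb
    simp only [phi] at hda hdb
    have hca : c = a := by
      by_contra h
      rw [if_neg h] at hda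
      omega
    have hcb : c = b := by
      by_contra h
      rw [if_neg h] at hdb
      omega
    exact hab (hca ▸ hcb)
end

section
/- Let G be a connected interval graph and P a diametral shortest path in G. Then b(P) <= b(G) <= b(P) + 1. -/
open SimpleGraph

namespace BurnProof

variable {V : Type*} {G : SimpleGraph V}

lemma dist_getVert_le (hconn : G.Connected) {x y : V} (q : G.Walk x y) :
    ∀ a c, a + c ≤ q.length → G.dist (q.getVert a) (q.getVert (a + c)) ≤ c := by
  intro a c
  induction c with
  | zero => intro _; simp
  | succ c ih =>
    intro h
    have h1 : G.dist (q.getVert a) (q.getVert (a + c)) ≤ c := ih (by omega)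
    have h2 : G.Adj (q.getVert (a + c)) (q.getVert (a + c + 1)) :=
      q.adj_getVert_succ (by omega)
    have h3 : G.dist (q.getVert (a + c)) (q.getVert (a + c + 1)) = 1 :=
      (G.dist_eq_one_iff_adj).mpr h2
    have h4 := hconn.dist_triangle (u := q.getVert a) (v := q.getVert (a + c))
      (w := q.getVert (a + c + 1))
    have : a + (c + 1) = a + c + 1 := by omega
    rw [this]
    omega

lemma dist_getVert_le' (hconn : G.Connected) {x y : V} (q : G.Walk x y) {a b : ℕ}
    (hab : a ≤ b) (hb : b ≤ q.length) : G.dist (q.getVert a) (q.getVert b) ≤ b - a := by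
  have := dist_getVert_le hconn q a (b - a) (by omega)
  rwa [show a + (b - a) = b by omega] at this

lemma geodesic_dist (hconn : G.Connected) {u v : V} (p : G.Walk u v)
    (hgeo : p.length = G.dist u v) {a b : ℕ} (hab : a ≤ b) (hb : b ≤ p.length) :
    G.dist (p.getVert a) (p.getVert b) = b - a := by
  have h1 := dist_getVert_le' hconn p (Nat.zero_le a) (le_trans hab hb)
  have h2 := dist_getVert_le' hconn p hab hb
  have h3 := dist_getVert_le' hconn p hb (le_refl p.length)
  have e0 : p.getVert 0 = u := p.getVert_zero
  have eL : p.getVert p.length = v := p.getVert_length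
  rw [e0] at h1
  rw [eL] at h3
  have t1 := hconn.dist_triangle (u := u) (v := p.getVert a) (w := p.getVert b)
  have t2 := hconn.dist_triangle (u := u) (v := p.getVert b) (w := v)
  omega

lemma pathGraph_dist_le {n : ℕ} : ∀ (c : ℕ) (i j : Fin (n+1)), j.val = i.val + c →
    (pathGraph (n+1)).dist i j ≤ c := by
  intro c
  induction c with
  | zero =>
    intro i j h
    have : i = j := Fin.ext (by omega)
    simp [this]
  | succ c ih =>
    intro i j h
    have hm : (i.val + c) < n + 1 := by omega
    have h1 : (pathGraph (n+1)).dist i ⟨i.val + c, hm⟩ ≤ c := ih i ⟨i.val + c, hm⟩ rfl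
    have h2 : (pathGraph (n+1)).Adj ⟨i.val + c, hm⟩ j := by
      rw [pathGraph_adj]
      left
      show i.val + c + 1 = j.val
      omega
    have h3 := ((pathGraph (n+1)).dist_eq_one_iff_adj).mpr h2
    have h4 := (pathGraph_connected n).dist_triangle (u := i) (v := ⟨i.val + c, hm⟩) (w := j)
    have hv : (⟨i.val + c, hm⟩ : Fin (n+1)).val = i.val + c := rfl
    omega

lemma pathGraph_walk_le {n : ℕ} {i j : Fin (n+1)} (w : (pathGraph (n+1)).Walk i j) :
    (i.val - j.val) + (j.val - i.val) ≤ w.length := by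
  induction w with
  | nil => omega
  | cons h q ih =>
    rw [pathGraph_adj] at h
    simp only [Walk.length_cons]
    omega

lemma pathGraph_dist {n : ℕ} (i j : Fin (n+1)) (hij : i.val ≤ j.val) :
    (pathGraph (n+1)).dist i j = j.val - i.val := by
  refine le_antisymm (pathGraph_dist_le _ i j (by omega)) ?_
  obtain ⟨w, hw⟩ := ((pathGraph_connected n).preconnected i j).exists_walk_length_eq_dist
  have := pathGraph_walk_le w
  omega

lemma pathGraph_dist_le' {n : ℕ} (i j : Fin (n+1)) :
    (pathGraph (n+1)).dist i j ≤ (i.val - j.val) + (j.val - i.val) := by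
  rcases le_total i.val j.val with h | h
  · have := pathGraph_dist_le (j.val - i.val) i j (by omega); omega
  · have := pathGraph_dist_le (i.val - j.val) j i (by omega)
    rw [SimpleGraph.dist_comm] at this
    omega

lemma sum_odd (k : ℕ) : ∑ r ∈ Finset.range k, (2*r+1) = k*k := by
  induction k with
  | zero => simp
  | succ k ih => rw [Finset.sum_range_succ, ih]; ring

lemma counting (hconn : G.Connected) {m k : ℕ} (f : Fin (m+1) → V)
    (hiso : ∀ a b : Fin (m+1), a.val ≤ b.val → G.dist (f a) (f b) = b.val - a.val)
    {x : Fin k → V} (hb : burnsBy G x) : m + 1 ≤ k * k := by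
  classical
  have hF : ∀ j : Fin (m+1), ∃ i : Fin k, G.dist (x i) (f j) ≤ k - 1 - i := by
    intro j; obtain ⟨i, _, hd⟩ := hb (f j); exact ⟨i, hd⟩
  choose F hFd using hF
  have hcard : (Finset.univ : Finset (Fin (m+1))).card
      = ∑ i : Fin k, (Finset.univ.filter fun j => F j = i).card :=
    Finset.card_eq_sum_card_fiberwise (fun j _ => Finset.mem_univ (F j))
  have hfib : ∀ i : Fin k, (Finset.univ.filter fun j : Fin (m+1) => F j = i).card
      ≤ 2*(k-1-i.val)+1 := by
    intro i
    set s := Finset.univ.filter fun j : Fin (m+1) => F j = i with hs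
    rcases s.eq_empty_or_nonempty with he | hne
    · simp [he]
    · set a := s.min' hne with ha
      have haS : a ∈ s := s.min'_mem hne
      have hFa : F a = i := (Finset.mem_filter.mp haS).2
      have hbound : ∀ j ∈ s, j.val ∈ Finset.Icc a.val (a.val + 2*(k-1-i.val)) := by
        intro j hj
        have h1 : a ≤ j := s.min'_le j hj
        have hdaj : G.dist (f a) (f j) = j.val - a.val := hiso a j h1
        have hda : G.dist (x i) (f a) ≤ k - 1 - i.val := by
          have := hFd a; rw [hFa] at this; exact this
        have hdj : G.dist (x i) (f j) ≤ k - 1 - i.val := by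
          have := hFd j; rw [(Finset.mem_filter.mp hj).2] at this; exact this
        rw [G.dist_comm] at hda
        have tri := hconn.dist_triangle (u := f a) (v := x i) (w := f j)
        rw [Finset.mem_Icc]
        have hj1 : a.val ≤ j.val := h1
        omega
      calc s.card ≤ (Finset.Icc a.val (a.val + 2*(k-1-i.val))).card :=
            Finset.card_le_card_of_injOn (fun j => j.val) hbound
              (fun x _ y _ h => Fin.ext h)
        _ = 2*(k-1-i.val)+1 := by rw [Nat.card_Icc]; omega
  have hsum : ∑ i : Fin k, (2*(k-1-i.val)+1) = k*k := by
    rw [Fin.sum_univ_eq_sum_range (fun t => 2*(k-1-t)+1)]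
    calc ∑ t ∈ Finset.range k, (2*(k-1-t)+1)
        = ∑ r ∈ Finset.range k, (2*r+1) := Finset.sum_range_reflect (fun r => 2*r+1) k
      _ = k*k := sum_odd k
  have htot : ∑ i : Fin k, (Finset.univ.filter fun j : Fin (m+1) => F j = i).card
      ≤ ∑ i : Fin k, (2*(k-1-i.val)+1) := Finset.sum_le_sum (fun i _ => hfib i)
  have : (Finset.univ : Finset (Fin (m+1))).card = m+1 := by simp
  omega

lemma block_lemma (K : ℕ) : ∀ j, j < K*K →
    ∃ d, 1 ≤ d ∧ d ≤ K ∧ K*K ≤ j + d*d ∧ j + (d-1)*(d-1) < K*K := by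
  intro j
  induction j with
  | zero =>
    intro h
    have hK1 : 1 ≤ K := by
      rcases Nat.eq_zero_or_pos K with h0 | h1
      · subst h0; simp at h
      · exact h1
    refine ⟨K, hK1, le_refl K, by omega, ?_⟩
    have := Nat.mul_self_lt_mul_self (show K - 1 < K by omega)
    omega
  | succ j ih =>
    intro h
    obtain ⟨d, hd1, hdK, hlo, hhi⟩ := ih (by omega)
    by_cases hc : j + 1 + (d-1)*(d-1) < K*K
    · exact ⟨d, hd1, hdK, by omega, hc⟩
    · have hge := not_lt.mp hc
      have hd2 : 2 ≤ d := by
        by_contra h2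
        have hd1' : d = 1 := by omega
        subst hd1'
        simp at hge
        omega
      refine ⟨d-1, by omega, by omega, hge, ?_⟩
      have key := Nat.mul_self_lt_mul_self (show d - 1 - 1 < d - 1 by omega)
      omega

lemma path_burn_aux (n K : ℕ) (hnK : n < K*K) :
    ∃ x : Fin K → Fin (n+1), burnsBy (pathGraph (n+1)) x := by
  classical
  refine ⟨fun i => ⟨min n (K*K - (K-i.val)*(K-i.val) + (K-1-i.val)),
    Nat.lt_succ_of_le (Nat.min_le_left _ _)⟩, ?_⟩
  intro j
  have hjK : j.val < K*K := lt_of_le_of_lt (by omega : j.val ≤ n) hnK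
  obtain ⟨d, hd1, hdK, hlo, hhi⟩ := block_lemma K j.val hjK
  have hKd : K - d < K := by omega
  refine ⟨⟨K - d, hKd⟩, (pathGraph_connected n).preconnected _ _, ?_⟩
  have e1 : K - ((⟨K - d, hKd⟩ : Fin K) : ℕ) = d := by
    show K - (K - d) = d; omega
  have e2 : K - 1 - ((⟨K - d, hKd⟩ : Fin K) : ℕ) = d - 1 := by
    show K - 1 - (K - d) = d - 1; omega
  beta_reduce
  simp only [e1, e2]
  have hdd : d*d ≤ K*K := Nat.mul_self_le_mul_self hdK
  have hsq : (d-1)*(d-1) + 2*d = d*d + 1 := by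
    obtain ⟨e, rfl⟩ : ∃ e, d = e + 1 := ⟨d - 1, by omega⟩
    simp only [Nat.add_sub_cancel]
    ring
  have hdist := pathGraph_dist_le'
    (⟨min n (K*K - d*d + (d-1)), Nat.lt_succ_of_le (Nat.min_le_left _ _)⟩ : Fin (n+1)) j
  have harith : min n (K*K - d*d + (d-1)) - j.val + (j.val - min n (K*K - d*d + (d-1)))
      ≤ d - 1 := by
    generalize hA : K*K = A at hnK hlo hhi hdd
    generalize hB : d*d = B at hlo hdd hsq
    generalize hC : (d-1)*(d-1) = C at hhi hsq
    omega
  exact le_trans hdist harith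

lemma path_burn (n : ℕ) :
    ∃ x : Fin (Nat.sqrt n + 1) → Fin (n+1), burnsBy (pathGraph (n+1)) x :=
  path_burn_aux n _ (Nat.lt_succ_sqrt n)
-- continuation: main geometric construction
section Main
variable {V : Type*}

lemma main_construct (G : SimpleGraph V) (lo hi : V → ℝ)
    (hint : ∀ v, lo v ≤ hi v)
    (hadj : ∀ u v, G.Adj u v ↔ u ≠ v ∧ lo u ≤ hi v ∧ lo v ≤ hi u)
    (hconn : G.Connected) (n K : ℕ)
    (hn : 3 ≤ n) (hK2 : 2 ≤ K) (hKn : K ≤ n) (hnK : n < K*K) (hs : (K-1)*(K-1) ≤ n)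
    (pv : ℕ → V)
    (hpadj : ∀ j, j < n → G.Adj (pv j) (pv (j+1)))
    (hdist : ∀ a b, a ≤ b → b ≤ n → G.dist (pv a) (pv b) = b - a)
    (hmax : ∀ a b : V, G.dist a b ≤ n)
    (hdir : hi (pv 0) < lo (pv 2)) :
    ∃ x : Fin (K+1) → V, burnsBy G x := by
  classical
  have meets_dist_le_one : ∀ a b : V, lo a ≤ hi b → lo b ≤ hi a → G.dist a b ≤ 1 := by
    intro a b h1 h2
    by_cases hab : a = b
    · subst hab
      rw [SimpleGraph.dist_self]
      omega
    · exact le_of_eq (SimpleGraph.dist_eq_one_iff_adj.mpr ((hadj a b).mpr ⟨hab, h1, h2⟩))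
  have adj_meets : ∀ a b : V, G.Adj a b → lo a ≤ hi b ∧ lo b ≤ hi a :=
    fun a b h => ((hadj a b).mp h).2
  have meet : ∀ j, j < n → lo (pv (j+1)) ≤ hi (pv j) ∧ lo (pv j) ≤ hi (pv (j+1)) := by
    intro j hj
    have := adj_meets _ _ (hpadj j hj)
    exact ⟨this.2, this.1⟩
  have disj : ∀ i j, i + 2 ≤ j → j ≤ n → hi (pv i) < lo (pv j) ∨ hi (pv j) < lo (pv i) := by
    intro i j h2 hjn
    have hd : G.dist (pv i) (pv j) = j - i := hdist i j (by omega) hjn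
    by_contra hcon
    push_neg at hcon
    have hle := meets_dist_le_one (pv i) (pv j) hcon.2 hcon.1
    omega
  have step2 : ∀ i, i + 2 ≤ n → hi (pv i) < lo (pv (i+2)) := by
    intro i
    induction i with
    | zero => intro _; exact hdir
    | succ i ih =>
      intro h
      have hprev := ih (by omega)
      rcases disj (i+1) (i+3) (by omega) (by omega) with h1 | h1
      · exact h1
      · exfalso
        have mA := meet i (by omega)
        have mC := meet (i+2) (by omega)
        have hx1 : max (lo (pv i)) (lo (pv (i+1))) ≤ hi (pv i) := max_le (hint _) mA.1
        have hx2 : lo (pv (i+1)) ≤ max (lo (pv i)) (lo (pv (i+1))) := le_max_right _ _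
        have hz1 : lo (pv (i+2)) ≤ max (lo (pv (i+2))) (lo (pv (i+3))) := le_max_left _ _
        have hz2 : max (lo (pv (i+2))) (lo (pv (i+3))) ≤ hi (pv (i+3)) := max_le mC.2 (hint _)
        linarith
  have mono0 : ∀ i c, i + 2 + c ≤ n → hi (pv i) < lo (pv (i + 2 + c)) := by
    intro i c
    induction c with
    | zero => intro h; exact step2 i (by omega)
    | succ c ih =>
      intro h
      have hprev : hi (pv i) < lo (pv (i+2+c)) := ih (by omega)
      rcases disj i (i+2+c+1) (by omega) (by omega) with h1 | h1
      · exact h1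
      · exfalso
        have m := meet (i+2+c) (by omega)
        have h2 : lo (pv (i+2+c)) ≤ max (lo (pv (i+2+c))) (lo (pv (i+2+c+1))) := le_max_left _ _
        have h3 : max (lo (pv (i+2+c))) (lo (pv (i+2+c+1))) ≤ hi (pv (i+2+c+1)) :=
          max_le m.2 (hint _)
        linarith [hint (pv i)]
  have mono' : ∀ i j, i + 2 ≤ j → j ≤ n → hi (pv i) < lo (pv j) := by
    intro i j h1 h2
    obtain ⟨c, rfl⟩ : ∃ c, j = i + 2 + c := ⟨j - (i+2), by omega⟩
    exact mono0 i c h2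
  set A := min (lo (pv 0)) (lo (pv 1)) with hAdef
  set M := max (hi (pv (n-1))) (hi (pv n)) with hMdef
  have hiM : ∀ j, j ≤ n → hi (pv j) ≤ M := by
    intro j hj
    rcases Nat.lt_or_ge j (n-1) with h | h
    · have h1 := mono' j n (by omega) (le_refl n)
      have h2 : hi (pv n) ≤ M := le_max_right _ _
      linarith [hint (pv n)]
    · have : j = n - 1 ∨ j = n := by omega
      rcases this with rfl | rfl
      · exact le_max_left _ _
      · exact le_max_right _ _
  have loA : ∀ j, j ≤ n → A ≤ lo (pv j) := by
    intro j hj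
    rcases Nat.lt_or_ge j 2 with h | h
    · have : j = 0 ∨ j = 1 := by omega
      rcases this with rfl | rfl
      · exact min_le_left _ _
      · exact min_le_right _ _
    · have h1 := mono' 0 j h hj
      have h2 : A ≤ lo (pv 0) := min_le_left _ _
      linarith [hint (pv 0)]
  have hAM : A ≤ M := by
    have h1 : A ≤ lo (pv 0) := min_le_left _ _
    have h2 := hiM 0 (by omega)
    linarith [hint (pv 0)]
  have classify : ∀ w : V,
      (∃ j, j ≤ n ∧ lo (pv j) ≤ hi w ∧ lo w ≤ hi (pv j)) ∨ hi w < A ∨ M < lo w := by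
    intro w
    by_contra hcon
    push_neg at hcon
    obtain ⟨hno, hwA, hwM⟩ := hcon
    set β := max (lo w) A with hβ
    have hβw : β ≤ hi w := max_le (hint w) hwA
    have hβM : β ≤ M := max_le hwM hAM
    have hβlo : lo w ≤ β := le_max_left _ _
    set P : ℕ → Prop := fun j => lo (pv j) ≤ β with hP
    have hex : ∃ m, m ≤ n ∧ P m := by
      rcases le_total (lo (pv 0)) (lo (pv 1)) with h | h
      · refine ⟨0, by omega, ?_⟩
        show lo (pv 0) ≤ β
        have : A = lo (pv 0) := min_eq_left h
        rw [← this]; exact le_max_right _ _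
      · refine ⟨1, by omega, ?_⟩
        show lo (pv 1) ≤ β
        have : A = lo (pv 1) := min_eq_right h
        rw [← this]; exact le_max_right _ _
    obtain ⟨m0, hm0n, hm0⟩ := hex
    obtain ⟨j₀, hj₀def⟩ : ∃ j, Nat.findGreatest P n = j := ⟨_, rfl⟩
    have hPj₀ : P j₀ := hj₀def ▸ Nat.findGreatest_spec hm0n hm0
    have hj₀n : j₀ ≤ n := hj₀def ▸ Nat.findGreatest_le n
    by_cases hup : β ≤ hi (pv j₀)
    · have := hno j₀ hj₀n (le_trans hPj₀ hβw)
      linarith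
    · push_neg at hup
      by_cases hj₀lt : j₀ < n
      · have hnP : ¬ P (j₀+1) := by
          intro hp
          have := Nat.le_findGreatest (show j₀+1 ≤ n by omega) hp
          omega
        have hm := (meet j₀ hj₀lt).1
        have : β < lo (pv (j₀+1)) := by
          by_contra h; push_neg at h; exact hnP h
        linarith
      · have hj₀eq : j₀ = n := by omega
        rw [hj₀eq] at hup
        have hβn1 : β ≤ hi (pv (n-1)) := by
          rcases le_max_iff.mp hβM with h | h
          · exact h
          · linarith
        have hm := meet (n-1) (by omega)
        rw [show n - 1 + 1 = n by omega] at hm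
        have := hno (n-1) (by omega) (by linarith [hm.2])
        linarith
  have RC : ∀ w : V, M < lo w → ∃ y : V, G.Adj y w ∧ lo y ≤ lo (pv n) ∧ lo w ≤ hi y := by
    intro w hw
    obtain ⟨q, hq⟩ := (hconn.preconnected (pv 0) w).exists_walk_length_eq_dist
    have hqlen : q.length ≤ n := by rw [hq]; exact hmax _ _
    set P : ℕ → Prop := fun j => lo (q.getVert j) ≤ lo (pv n) with hP
    have hP0 : P 0 := by
      show lo (q.getVert 0) ≤ lo (pv n)
      rw [q.getVert_zero]
      have := mono' 0 n (by omega) (le_refl n)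
      linarith [hint (pv 0)]
    obtain ⟨a, hadef⟩ : ∃ a, Nat.findGreatest P q.length = a := ⟨_, rfl⟩
    have hPa : P a := hadef ▸ Nat.findGreatest_spec (Nat.zero_le _) hP0
    have han : a ≤ q.length := hadef ▸ Nat.findGreatest_le _
    have hPm : ¬ P q.length := by
      show ¬ lo (q.getVert q.length) ≤ lo (pv n)
      rw [q.getVert_length]
      push_neg
      have h2 : hi (pv n) ≤ M := hiM n (le_refl n)
      linarith [hint (pv n)]
    have ham : a < q.length := by
      rcases lt_or_eq_of_le han with h | h
      · exact h
      · exact absurd (h ▸ hPa) hPm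
    have hnext : ¬ P (a+1) := by
      intro hp
      have := Nat.le_findGreatest (show a+1 ≤ q.length by omega) hp
      omega
    have hlt : lo (pv n) < lo (q.getVert (a+1)) := by
      by_contra h; push_neg at h; exact hnext h
    have hadj_a : G.Adj (q.getVert a) (q.getVert (a+1)) := q.adj_getVert_succ ham
    have hmeet := adj_meets _ _ hadj_a
    have hm1 : lo (q.getVert a) ≤ hi (pv n) := le_trans hPa (hint _)
    have hm2 : lo (pv n) ≤ hi (q.getVert a) := by linarith [hmeet.2]
    have hda : G.dist (pv 0) (q.getVert a) ≤ a := by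
      have := dist_getVert_le' hconn q (Nat.zero_le a) (le_of_lt ham)
      rwa [q.getVert_zero] at this
    have hd1 := meets_dist_le_one _ _ hm1 hm2
    have htri := hconn.dist_triangle (u := pv 0) (v := q.getVert a) (w := pv n)
    have hdn : G.dist (pv 0) (pv n) = n := by
      have := hdist 0 n (by omega) (le_refl n); omega
    have haeq : a + 1 = q.length := by omega
    have hgw : q.getVert (a+1) = w := by rw [haeq]; exact q.getVert_length
    refine ⟨q.getVert a, ?_, hPa, ?_⟩
    · have h := hadj_a; rw [hgw] at h; exact h
    · have := hmeet.2; rw [hgw] at this; exact this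
  have LC : ∀ w : V, hi w < A → ∃ y : V, G.Adj y w ∧ hi (pv 0) ≤ hi y ∧ lo y ≤ hi w := by
    intro w hw
    obtain ⟨q, hq⟩ := (hconn.preconnected (pv n) w).exists_walk_length_eq_dist
    have hqlen : q.length ≤ n := by rw [hq]; exact hmax _ _
    set P : ℕ → Prop := fun j => hi (pv 0) ≤ hi (q.getVert j) with hP
    have hP0 : P 0 := by
      show hi (pv 0) ≤ hi (q.getVert 0)
      rw [q.getVert_zero]
      have := mono' 0 n (by omega) (le_refl n)
      linarith [hint (pv n)]
    obtain ⟨a, hadef⟩ : ∃ a, Nat.findGreatest P q.length = a := ⟨_, rfl⟩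
    have hPa : P a := hadef ▸ Nat.findGreatest_spec (Nat.zero_le _) hP0
    have han : a ≤ q.length := hadef ▸ Nat.findGreatest_le _
    have hPm : ¬ P q.length := by
      show ¬ hi (pv 0) ≤ hi (q.getVert q.length)
      rw [q.getVert_length]
      push_neg
      have hA0 : A ≤ lo (pv 0) := min_le_left _ _
      linarith [hint (pv 0)]
    have ham : a < q.length := by
      rcases lt_or_eq_of_le han with h | h
      · exact h
      · exact absurd (h ▸ hPa) hPm
    have hnext : ¬ P (a+1) := by
      intro hp
      have := Nat.le_findGreatest (show a+1 ≤ q.length by omega) hp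
      omega
    have hlt : hi (q.getVert (a+1)) < hi (pv 0) := by
      by_contra h; push_neg at h; exact hnext h
    have hadj_a : G.Adj (q.getVert a) (q.getVert (a+1)) := q.adj_getVert_succ ham
    have hmeet := adj_meets _ _ hadj_a
    have hm1 : lo (q.getVert a) ≤ hi (pv 0) := by linarith [hmeet.1]
    have hm2 : lo (pv 0) ≤ hi (q.getVert a) := by linarith [hint (pv 0), hPa]
    have hda : G.dist (pv n) (q.getVert a) ≤ a := by
      have := dist_getVert_le' hconn q (Nat.zero_le a) (le_of_lt ham)
      rwa [q.getVert_zero] at this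
    have hd1 := meets_dist_le_one _ _ hm1 hm2
    have htri := hconn.dist_triangle (u := pv n) (v := q.getVert a) (w := pv 0)
    have hdn : G.dist (pv n) (pv 0) = n := by
      have := hdist 0 n (by omega) (le_refl n)
      rw [G.dist_comm]
      omega
    have haeq : a + 1 = q.length := by omega
    have hgw : q.getVert (a+1) = w := by rw [haeq]; exact q.getVert_length
    refine ⟨q.getVert a, ?_, hPa, ?_⟩
    · have h := hadj_a; rw [hgw] at h; exact h
    · have := hmeet.1; rw [hgw] at this; exact this
  have pv_dist_le : ∀ a b, a ≤ n → b ≤ n → G.dist (pv a) (pv b) ≤ (a - b) + (b - a) := by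
    intro a b hta htb
    rcases le_total a b with h | h
    · have := hdist a b h htb; omega
    · have := hdist b a h hta
      rw [G.dist_comm]
      omega
  have cover_dom : ∀ (w : V) j c, j ≤ n → c ≤ n → lo (pv j) ≤ hi w → lo w ≤ hi (pv j) →
      G.dist (pv c) w ≤ (c - j) + (j - c) + 1 := by
    intro w j c hj hc h1 h2
    have t := hconn.dist_triangle (u := pv c) (v := pv j) (w := w)
    have d1 := pv_dist_le c j hc hj
    have d2 := meets_dist_le_one (pv j) w h1 h2
    omega
  have cover_LC : ∀ w : V, hi w < A → ∀ c, 1 ≤ c → c ≤ n → G.dist (pv c) w ≤ (c - 1) + 2 := by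
    intro w hw c hc1 hcn
    obtain ⟨y, hyw, hy0, hyl⟩ := LC w hw
    have m0 := meet 0 (by omega)
    have hA1 : A ≤ lo (pv 1) := min_le_right _ _
    have h1 : lo (pv 1) ≤ hi y := by linarith [m0.1]
    have h2 : lo y ≤ hi (pv 1) := by linarith [hint (pv 1)]
    have d1 := meets_dist_le_one (pv 1) y h1 h2
    have d2 : G.dist y w ≤ 1 := le_of_eq (SimpleGraph.dist_eq_one_iff_adj.mpr hyw)
    have t1 := hconn.dist_triangle (u := pv c) (v := pv 1) (w := w)
    have t2 := hconn.dist_triangle (u := pv 1) (v := y) (w := w)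
    have d3 := pv_dist_le c 1 hcn (by omega)
    omega
  have cover_RC : ∀ w : V, M < lo w → ∀ c, c ≤ n - 1 → G.dist (pv c) w ≤ (n - 1 - c) + 2 := by
    intro w hw c hcn
    obtain ⟨y, hyw, hyl, hyr⟩ := RC w hw
    have mn := meet (n-1) (by omega)
    rw [show n - 1 + 1 = n by omega] at mn
    have h1 : lo (pv (n-1)) ≤ hi y := by
      have := hiM n (le_refl n)
      linarith [mn.2]
    have h2 : lo y ≤ hi (pv (n-1)) := le_trans hyl mn.1
    have d1 := meets_dist_le_one (pv (n-1)) y h1 h2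
    have d2 : G.dist y w ≤ 1 := le_of_eq (SimpleGraph.dist_eq_one_iff_adj.mpr hyw)
    have t1 := hconn.dist_triangle (u := pv c) (v := pv (n-1)) (w := w)
    have t2 := hconn.dist_triangle (u := pv (n-1)) (v := y) (w := w)
    have d3 := pv_dist_le c (n-1) (by omega) (by omega)
    omega
  have key : ∀ (x : Fin (K+1) → V),
      (∀ w : V, ∃ m : ℕ, ∃ hm : m < K + 1, G.dist (x ⟨m, hm⟩) w ≤ K - m) → burnsBy G x := by
    intro x hx w
    obtain ⟨m, hm, hd⟩ := hx w
    refine ⟨⟨m, hm⟩, hconn.preconnected _ _, ?_⟩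
    have hv : ((⟨m, hm⟩ : Fin (K+1)) : ℕ) = m := rfl
    omega
  rcases Nat.lt_or_ge n 4 with hn4 | hn4
  · -- n = 3 case
    have hn3 : n = 3 := by omega
    subst hn3
    have hK2' : K = 2 := by
      by_contra hne
      have h3 : 3 ≤ K := by omega
      have h4 := Nat.mul_self_le_mul_self (show 2 ≤ K - 1 by omega)
      linarith
    subst hK2'
    have l01 : lo (pv 1) ≤ hi (pv 0) := (meet 0 (by omega)).1
    have l12 : lo (pv 2) ≤ hi (pv 1) := (meet 1 (by omega)).1
    have l23 : lo (pv 3) ≤ hi (pv 2) := (meet 2 (by omega)).1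
    have s02 : hi (pv 0) < lo (pv 2) := mono' 0 2 (by omega) (by omega)
    have s13 : hi (pv 1) < lo (pv 3) := mono' 1 3 (by omega) (by omega)
    have hA0 : A ≤ lo (pv 0) := min_le_left _ _
    have hA1 : A ≤ lo (pv 1) := min_le_right _ _
    have hM0 : hi (pv 0) ≤ M := hiM 0 (by omega)
    have hM1 : hi (pv 1) ≤ M := hiM 1 (by omega)
    have hM2 : hi (pv 2) ≤ M := hiM 2 (by omega)
    have hM3 : hi (pv 3) ≤ M := hiM 3 (by omega)
    by_cases hRC0 : ∃ w : V, M < lo w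
    case neg =>
      refine ⟨_, key (fun i => if (i : ℕ) = 0 then pv 1 else pv 3) ?_⟩
      intro w
      rcases classify w with ⟨j, hj, h1, h2⟩ | hLCw | hRCw
      · rcases (show j = 3 ∨ j ≤ 2 by omega) with rfl | hj2
        · refine ⟨1, by omega, ?_⟩
          show G.dist (pv 3) w ≤ 2 - 1
          have := meets_dist_le_one (pv 3) w h1 h2
          omega
        · refine ⟨0, by omega, ?_⟩
          show G.dist (pv 1) w ≤ 2 - 0
          have := cover_dom w j 1 (by omega) (by omega) h1 h2
          omega
      · refine ⟨0, by omega, ?_⟩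
        show G.dist (pv 1) w ≤ 2 - 0
        have := cover_LC w hLCw 1 (by omega) (by omega)
        omega
      · exact absurd ⟨w, hRCw⟩ hRC0
    case pos =>
      by_cases hLC0 : ∃ w : V, hi w < A
      case neg =>
        refine ⟨_, key (fun i => if (i : ℕ) = 0 then pv 2 else pv 0) ?_⟩
        intro w
        rcases classify w with ⟨j, hj, h1, h2⟩ | hLCw | hRCw
        · rcases (show j = 0 ∨ 1 ≤ j by omega) with rfl | hj2
          · refine ⟨1, by omega, ?_⟩
            show G.dist (pv 0) w ≤ 2 - 1
            have := meets_dist_le_one (pv 0) w h1 h2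
            omega
          · refine ⟨0, by omega, ?_⟩
            show G.dist (pv 2) w ≤ 2 - 0
            have := cover_dom w j 2 (by omega) (by omega) h1 h2
            omega
        · exact absurd ⟨w, hLCw⟩ hLC0
        · refine ⟨0, by omega, ?_⟩
          show G.dist (pv 2) w ≤ 2 - 0
          have := cover_RC w hRCw 2 (by omega)
          omega
      case pos =>
        obtain ⟨wr, hwr⟩ := hRC0
        obtain ⟨wl, hwl⟩ := hLC0
        by_cases hQ : ∃ Q : V, lo Q ≤ hi (pv 0) ∧ lo (pv 3) ≤ hi Q
        · obtain ⟨Q, hQ1, hQ2⟩ := hQ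
          have hQhi : hi (pv 0) < hi Q := by linarith
          refine ⟨_, key (fun _ => Q) ?_⟩
          intro w
          refine ⟨0, by omega, ?_⟩
          show G.dist Q w ≤ 2 - 0
          rcases classify w with ⟨j, hj, h1, h2⟩ | hLCw | hRCw
          · have hQm : lo (pv j) ≤ hi Q ∧ lo Q ≤ hi (pv j) := by
              rcases (show j = 0 ∨ j = 1 ∨ j = 2 ∨ j = 3 by omega) with rfl | rfl | rfl | rfl
              · exact ⟨by linarith [hint (pv 0)], hQ1⟩
              · exact ⟨by linarith, by linarith⟩
              · exact ⟨by linarith, by linarith [hint (pv 2)]⟩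
              · exact ⟨hQ2, by linarith [hint (pv 3)]⟩
            have d1 := meets_dist_le_one Q (pv j) hQm.2 hQm.1
            have d2 := meets_dist_le_one (pv j) w h1 h2
            have t := hconn.dist_triangle (u := Q) (v := pv j) (w := w)
            omega
          · obtain ⟨y, hyw, hy0, hyl⟩ := LC w hLCw
            have d1 := meets_dist_le_one Q y (by linarith) (by linarith [hint (pv 0)])
            have d2 : G.dist y w ≤ 1 := le_of_eq (SimpleGraph.dist_eq_one_iff_adj.mpr hyw)
            have t := hconn.dist_triangle (u := Q) (v := y) (w := w)
            omega
          · obtain ⟨y, hyw, hyl, hyr⟩ := RC w hRCw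
            have d1 := meets_dist_le_one Q y (by linarith) (by linarith)
            have d2 : G.dist y w ≤ 1 := le_of_eq (SimpleGraph.dist_eq_one_iff_adj.mpr hyw)
            have t := hconn.dist_triangle (u := Q) (v := y) (w := w)
            omega
        · -- no Q : hub machinery
          have hub : ∀ a b : V, hi a < A → M < lo b →
              ∃ X Y : V, ∃ c : ℝ, lo X ≤ hi a ∧ c ≤ hi X ∧ lo Y ≤ c ∧ lo b ≤ hi Y ∧
                hi (pv 0) < c ∧ c < lo (pv 3) := by
            intro a b ha hb
            obtain ⟨q, hq⟩ := (hconn.preconnected a b).exists_walk_length_eq_dist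
            have hqlen : q.length ≤ 3 := by rw [hq]; exact hmax a b
            have hga : q.getVert 0 = a := q.getVert_zero
            have hgb : q.getVert q.length = b := q.getVert_length
            rcases (show q.length = 0 ∨ q.length = 1 ∨ q.length = 2 ∨ q.length = 3 by omega)
              with hl | hl | hl | hl
            · exfalso
              have h := hgb
              rw [hl] at h
              have hab : a = b := hga.symm.trans h
              rw [← hab] at hb
              linarith [hint a, hAM]
            · exfalso
              have h1 : q.getVert 1 = b := by
                have h := hgb
                rw [hl] at h
                exact h
              have e01 := q.adj_getVert_succ (show 0 < q.length by omega)
              rw [hga, show (0+1 : ℕ) = 1 from rfl, h1] at e01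
              have m1 := adj_meets _ _ e01
              linarith [m1.2, hint a, hAM]
            · exfalso
              have h1 : q.getVert 2 = b := by
                have h := hgb
                rw [hl] at h
                exact h
              have e01 := q.adj_getVert_succ (show 0 < q.length by omega)
              have e12 := q.adj_getVert_succ (show 1 < q.length by omega)
              rw [hga] at e01
              rw [show (1+1 : ℕ) = 2 from rfl, h1] at e12
              have m1 := adj_meets _ _ e01
              have m2 := adj_meets _ _ e12
              exact hQ ⟨q.getVert 1, by linarith [m1.2, hint (pv 0)],
                by linarith [m2.2, hint (pv 3)]⟩
            · have h3g : q.getVert 3 = b := by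
                have h := hgb
                rw [hl] at h
                exact h
              have e01 := q.adj_getVert_succ (show 0 < q.length by omega)
              have e12 := q.adj_getVert_succ (show 1 < q.length by omega)
              have e23 := q.adj_getVert_succ (show 2 < q.length by omega)
              rw [hga] at e01
              rw [show (2+1 : ℕ) = 3 from rfl, h3g] at e23
              have maX := adj_meets _ _ e01
              have mXY := adj_meets _ _ e12
              have mYb := adj_meets _ _ e23
              have claim1 : hi a ≤ hi (q.getVert 1) := by
                by_contra hcl
                push_neg at hcl
                exact hQ ⟨q.getVert 2, by linarith [mXY.2, hint (pv 0)],
                  by linarith [mYb.2, hint (pv 3)]⟩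
              refine ⟨q.getVert 1, q.getVert 2, max (lo (q.getVert 2)) (hi a), maX.2,
                max_le mXY.2 claim1, le_max_left _ _, mYb.2, ?_, ?_⟩
              · by_contra hcl
                push_neg at hcl
                exact hQ ⟨q.getVert 2, le_trans (le_max_left _ _) hcl,
                  by linarith [mYb.2, hint (pv 3)]⟩
              · by_contra hcl
                push_neg at hcl
                exact hQ ⟨q.getVert 1, by linarith [maX.2, hint (pv 0)],
                  le_trans hcl (max_le mXY.2 claim1)⟩
          choose fX fY fc hfXa hfcX hfYc hfbY hfc0 hfc3 using hub
          have hXY1 : ∀ a b (ha : hi a < A) (hb : M < lo b),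
              G.dist (fX a b ha hb) (fY a b ha hb) ≤ 1 := by
            intro a b ha hb
            apply meets_dist_le_one
            · linarith [hfXa a b ha hb, hfbY a b ha hb, hint (pv 0)]
            · linarith [hfYc a b ha hb, hfcX a b ha hb]
          have domXY : ∀ a b (ha : hi a < A) (hb : M < lo b) (w : V) (j : ℕ), j ≤ 3 →
              lo (pv j) ≤ hi w → lo w ≤ hi (pv j) →
              G.dist (fX a b ha hb) w ≤ 2 ∧ G.dist (fY a b ha hb) w ≤ 2 := by
            intro a b ha hb w j hj h1 h2
            have hXa := hfXa a b ha hb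
            have hcX := hfcX a b ha hb
            have hYc := hfYc a b ha hb
            have hbY := hfbY a b ha hb
            have hc0 := hfc0 a b ha hb
            have hc3 := hfc3 a b ha hb
            have hXYd := hXY1 a b ha hb
            have hYX : G.dist (fY a b ha hb) (fX a b ha hb) ≤ 1 := by
              rw [SimpleGraph.dist_comm]; exact hXYd
            have hAj : A ≤ lo (pv j) := loA j (by omega)
            have hMj : hi (pv j) ≤ M := hiM j (by omega)
            have hpt1 : max (lo w) (lo (pv j)) ≤ hi w := max_le (hint w) h1
            have hpt2 : max (lo w) (lo (pv j)) ≤ hi (pv j) := max_le h2 (hint _)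
            have hptl : lo w ≤ max (lo w) (lo (pv j)) := le_max_left _ _
            have hptr : lo (pv j) ≤ max (lo w) (lo (pv j)) := le_max_right _ _
            by_cases hpc : max (lo w) (lo (pv j)) ≤ fc a b ha hb
            · have dX : G.dist (fX a b ha hb) w ≤ 1 := meets_dist_le_one _ _
                (by linarith) (by linarith)
              have tY := hconn.dist_triangle (u := fY a b ha hb) (v := fX a b ha hb) (w := w)
              exact ⟨by omega, by omega⟩
            · push_neg at hpc
              have dY : G.dist (fY a b ha hb) w ≤ 1 := meets_dist_le_one _ _
                (by linarith) (by linarith)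
              have tX := hconn.dist_triangle (u := fX a b ha hb) (v := fY a b ha hb) (w := w)
              exact ⟨by omega, by omega⟩
          have hXLC : ∀ (a b : V) (ha : hi a < A) (hb : M < lo b) (w : V), hi w < A →
              G.dist (fX a b ha hb) w ≤ 2 := by
            intro a b ha hb w hw
            obtain ⟨y, hyw, hy0, hyl⟩ := LC w hw
            have d1 : G.dist (fX a b ha hb) y ≤ 1 := meets_dist_le_one _ _
              (by linarith [hfXa a b ha hb, hA0, hint (pv 0)])
              (by linarith [hfcX a b ha hb, hfc0 a b ha hb, hA0, hint (pv 0)])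
            have d2 : G.dist y w ≤ 1 := le_of_eq (SimpleGraph.dist_eq_one_iff_adj.mpr hyw)
            have t := hconn.dist_triangle (u := fX a b ha hb) (v := y) (w := w)
            omega
          have hYRC : ∀ (a b : V) (ha : hi a < A) (hb : M < lo b) (w : V), M < lo w →
              G.dist (fY a b ha hb) w ≤ 2 := by
            intro a b ha hb w hw
            obtain ⟨y, hyw, hyl, hyr⟩ := RC w hw
            have d1 : G.dist (fY a b ha hb) y ≤ 1 := meets_dist_le_one _ _
              (by linarith [hfYc a b ha hb, hfc3 a b ha hb, hM3, hint (pv 3), hint w])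
              (by linarith [hM3, hint (pv 3), hfbY a b ha hb])
            have d2 : G.dist y w ≤ 1 := le_of_eq (SimpleGraph.dist_eq_one_iff_adj.mpr hyw)
            have t := hconn.dist_triangle (u := fY a b ha hb) (v := y) (w := w)
            omega
          by_cases hXC : ∃ (a b : V) (ha : hi a < A) (hb : M < lo b),
              ∀ b' : V, M < lo b' → ∃ (a2 b2 : V) (ha2 : hi a2 < A) (hb2 : M < lo b2),
                fc a2 b2 ha2 hb2 ≤ fc a b ha hb ∧ lo b' ≤ lo b2
          · obtain ⟨a, b, ha, hb, hcen⟩ := hXC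
            refine ⟨_, key (fun _ => fX a b ha hb) ?_⟩
            intro w
            refine ⟨0, by omega, ?_⟩
            show G.dist (fX a b ha hb) w ≤ 2 - 0
            rcases classify w with ⟨j, hj, h1, h2⟩ | hLCw | hRCw
            · have := (domXY a b ha hb w j (by omega) h1 h2).1
              omega
            · have := hXLC a b ha hb w hLCw
              omega
            · obtain ⟨a2, b2, ha2, hb2, hcc, hbb⟩ := hcen w hRCw
              have d1 : G.dist (fX a b ha hb) (fY a2 b2 ha2 hb2) ≤ 1 := meets_dist_le_one _ _
                (by linarith [hfXa a b ha hb, hA0, hint (pv 0), hM0, hfbY a2 b2 ha2 hb2])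
                (by linarith [hfYc a2 b2 ha2 hb2, hfcX a b ha hb])
              have d2 : G.dist (fY a2 b2 ha2 hb2) w ≤ 1 := meets_dist_le_one _ _
                (by linarith [hfYc a2 b2 ha2 hb2, hfc3 a2 b2 ha2 hb2, hM3, hint (pv 3), hint w])
                (by linarith [hfbY a2 b2 ha2 hb2])
              have t := hconn.dist_triangle (u := fX a b ha hb) (v := fY a2 b2 ha2 hb2) (w := w)
              omega
          · by_cases hYC : ∃ (a b : V) (ha : hi a < A) (hb : M < lo b),
                ∀ a' : V, hi a' < A → ∃ (a2 b2 : V) (ha2 : hi a2 < A) (hb2 : M < lo b2),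
                  fc a b ha hb ≤ fc a2 b2 ha2 hb2 ∧ hi a2 ≤ hi a'
            · obtain ⟨a, b, ha, hb, hcen⟩ := hYC
              refine ⟨_, key (fun _ => fY a b ha hb) ?_⟩
              intro w
              refine ⟨0, by omega, ?_⟩
              show G.dist (fY a b ha hb) w ≤ 2 - 0
              rcases classify w with ⟨j, hj, h1, h2⟩ | hLCw | hRCw
              · have := (domXY a b ha hb w j (by omega) h1 h2).2
                omega
              · obtain ⟨a2, b2, ha2, hb2, hcc, haa⟩ := hcen w hLCw
                have d1 : G.dist (fY a b ha hb) (fX a2 b2 ha2 hb2) ≤ 1 := meets_dist_le_one _ _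
                  (by linarith [hfYc a b ha hb, hfcX a2 b2 ha2 hb2])
                  (by linarith [hfXa a2 b2 ha2 hb2, hA0, hint (pv 0), hM0, hfbY a b ha hb])
                have d2 : G.dist (fX a2 b2 ha2 hb2) w ≤ 1 := meets_dist_le_one _ _
                  (by linarith [hfXa a2 b2 ha2 hb2])
                  (by linarith [hint w, hA0, hint (pv 0), hfc0 a2 b2 ha2 hb2,
                    hfcX a2 b2 ha2 hb2])
                have t := hconn.dist_triangle (u := fY a b ha hb) (v := fX a2 b2 ha2 hb2) (w := w)
                omega
              · have := hYRC a b ha hb w hRCw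
                omega
            · exfalso
              push_neg at hXC hYC
              obtain ⟨b1, hb1, hB⟩ := hXC wl wr hwl hwr
              obtain ⟨a1, ha1, hA'⟩ := hYC wl wr hwl hwr
              have h1 : fc wl wr hwl hwr < fc a1 b1 ha1 hb1 := by
                by_contra hcl
                push_neg at hcl
                exact absurd (hB a1 b1 ha1 hb1 hcl) (lt_irrefl _)
              exact absurd (hA' a1 b1 ha1 hb1 (le_of_lt h1)) (lt_irrefl _)
  · -- n ≥ 4 case
    have hK3 : 3 ≤ K := by
      by_contra hcl
      have hK2'' : K = 2 := by omega
      subst hK2''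
      norm_num at hnK
      omega
    refine ⟨_, key (fun i => pv (if (i:ℕ) = 0 then K - 1 else if (i:ℕ) = 1 then n + 2 - K
      else min n (2*K - 1 + ((K-2)*(K-2) - (K - (i:ℕ))*(K - (i:ℕ))) + (K - (i:ℕ) - 1)))) ?_⟩
    intro w
    rcases classify w with ⟨j, hj, h1, h2⟩ | hLCw | hRCw
    · by_cases hc1 : j + 2 ≤ 2*K
      · refine ⟨0, by omega, ?_⟩
        show G.dist (pv (K-1)) w ≤ K - 0
        have := cover_dom w j (K-1) hj (by omega) h1 h2
        omega
      · by_cases hc2 : n + 4 ≤ j + 2*K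
        · refine ⟨1, by omega, ?_⟩
          show G.dist (pv (n + 2 - K)) w ≤ K - 1
          have := cover_dom w j (n+2-K) hj (by omega) h1 h2
          omega
        · push_neg at hc1 hc2
          obtain ⟨j', rfl⟩ : ∃ j', j = 2*K - 1 + j' := ⟨j - (2*K-1), by omega⟩
          obtain ⟨KK, hKK⟩ : ∃ z, K*K = z := ⟨_, rfl⟩
          obtain ⟨K2, hK2sq⟩ : ∃ z, (K-2)*(K-2) = z := ⟨_, rfl⟩
          have f4 : K2 + 4*K = KK + 4 := by
            rw [← hKK, ← hK2sq]
            obtain ⟨mK, rfl⟩ : ∃ m, K = m + 2 := ⟨K - 2, by omega⟩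
            simp only [Nat.add_sub_cancel]
            ring
          rw [hKK] at hnK
          have hj'lt : j' < K2 := by omega
          obtain ⟨d, hd1, hdK, hlo2, hhi2⟩ := block_lemma (K-2) j' (by rw [hK2sq]; exact hj'lt)
          rw [hK2sq] at hlo2 hhi2
          obtain ⟨DD, hDD⟩ : ∃ z, d*d = z := ⟨_, rfl⟩
          obtain ⟨D1, hD1⟩ : ∃ z, (d-1)*(d-1) = z := ⟨_, rfl⟩
          rw [hDD] at hlo2
          rw [hD1] at hhi2
          have hsq2 : D1 + 2*d = DD + 1 := by
            rw [← hDD, ← hD1]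
            obtain ⟨e, rfl⟩ : ∃ e, d = e + 1 := ⟨d - 1, by omega⟩
            simp only [Nat.add_sub_cancel]
            ring
          have hDle : DD ≤ K2 := by
            rw [← hDD, ← hK2sq]; exact Nat.mul_self_le_mul_self hdK
          refine ⟨K - d, by omega, ?_⟩
          show G.dist (pv (if (K - d) = 0 then K - 1 else if (K - d) = 1 then n + 2 - K
              else min n (2*K - 1 + ((K-2)*(K-2) - (K - (K-d))*(K - (K-d))) + (K - (K-d) - 1)))) w
              ≤ K - (K - d)
          have hxeq : (if (K - d) = 0 then K - 1 else if (K - d) = 1 then n + 2 - K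
              else min n (2*K - 1 + ((K-2)*(K-2) - (K - (K-d))*(K - (K-d))) + (K - (K-d) - 1)))
              = min n (2*K - 1 + (K2 - DD) + (d - 1)) := by
            rw [if_neg (by omega), if_neg (by omega), show K - (K - d) = d by omega,
              hK2sq, hDD]
          rw [hxeq]
          have hposn : min n (2*K - 1 + (K2 - DD) + (d - 1)) ≤ n := min_le_left _ _
          have := cover_dom w (2*K-1+j') (min n (2*K - 1 + (K2 - DD) + (d - 1)))
            (by omega) hposn h1 h2
          omega
    · refine ⟨0, by omega, ?_⟩
      show G.dist (pv (K-1)) w ≤ K - 0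
      have := cover_LC w hLCw (K-1) (by omega) (by omega)
      omega
    · refine ⟨1, by omega, ?_⟩
      show G.dist (pv (n + 2 - K)) w ≤ K - 1
      have := cover_RC w hRCw (n+2-K) (by omega)
      omega

end Main


end BurnProof

open BurnProof in
/-- Let `G` be a connected interval graph (the intersection graph of closed real
intervals `[lo v, hi v]`) and `P` a diametral shortest path in `G` (a geodesic of
maximum length).  Then `b(P) ≤ b(G) ≤ b(P) + 1`, where `P`, as a graph, is the path
graph on `p.length + 1` vertices. -/
theorem burningNumber_intervalGraph_bounds {V : Type*} (G : SimpleGraph V)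
    (lo hi : V → ℝ) (hint : ∀ v, lo v ≤ hi v)
    (hadj : ∀ u v, G.Adj u v ↔ u ≠ v ∧ lo u ≤ hi v ∧ lo v ≤ hi u)
    (hconn : G.Connected) {u v : V} (p : G.Walk u v) (hp : p.IsPath)
    (hgeo : p.length = G.dist u v)
    (hmax : ∀ a b : V, G.dist a b ≤ p.length) :
    burningNumber (SimpleGraph.pathGraph (p.length + 1)) ≤ burningNumber G ∧
      burningNumber G ≤ burningNumber (SimpleGraph.pathGraph (p.length + 1)) + 1 := by
  classical
  obtain ⟨n, hn⟩ : ∃ n, p.length = n := ⟨_, rfl⟩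
  rw [hn]
  have hmax' : ∀ a b : V, G.dist a b ≤ n := fun a b => hn ▸ hmax a b
  have hdist : ∀ a b, a ≤ b → b ≤ n → G.dist (p.getVert a) (p.getVert b) = b - a := by
    intro a b hab hb
    exact geodesic_dist hconn p hgeo hab (by omega)
  obtain ⟨K, hKdef⟩ : ∃ K, Nat.sqrt n + 1 = K := ⟨_, rfl⟩
  have hpath_mem : ∃ x : Fin K → Fin (n+1), burnsBy (SimpleGraph.pathGraph (n+1)) x :=
    hKdef ▸ path_burn n
  have hSG : ∃ x : Fin (n+2) → V, burnsBy G x := by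
    refine ⟨fun _ => u, fun w => ⟨0, hconn.preconnected _ _, ?_⟩⟩
    show G.dist u w ≤ n + 2 - 1 - ((0 : Fin (n+2)) : ℕ)
    have h := hmax' u w
    have hv : ((0 : Fin (n+2)) : ℕ) = 0 := rfl
    omega
  have hpath_le : burningNumber (SimpleGraph.pathGraph (n+1)) ≤ K := Nat.sInf_le hpath_mem
  have hK_path : K ≤ burningNumber (SimpleGraph.pathGraph (n+1)) := by
    apply le_csInf ⟨K, hpath_mem⟩
    rintro k ⟨x, hx⟩
    have hcount := counting (SimpleGraph.pathGraph_connected n) (fun j : Fin (n+1) => j)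
      (fun a b hab => pathGraph_dist a b hab) hx
    by_contra hcl
    push_neg at hcl
    have hks : k ≤ Nat.sqrt n := by omega
    have h2 : k*k ≤ n := Nat.le_sqrt.mp hks
    linarith
  have hK_G : K ≤ burningNumber G := by
    apply le_csInf ⟨n+2, hSG⟩
    rintro k ⟨x, hx⟩
    have hcount := counting hconn (fun j : Fin (n+1) => p.getVert j.val)
      (fun a b hab => hdist a.val b.val hab (by omega)) hx
    by_contra hcl
    push_neg at hcl
    have hks : k ≤ Nat.sqrt n := by omega
    have h2 : k*k ≤ n := Nat.le_sqrt.mp hks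
    linarith
  have hG_le : burningNumber G ≤ K + 1 := by
    apply Nat.sInf_le
    show ∃ x : Fin (K+1) → V, burnsBy G x
    rcases Nat.lt_or_ge n 3 with h3 | h3
    · refine ⟨fun _ => u, fun w => ⟨0, hconn.preconnected _ _, ?_⟩⟩
      show G.dist u w ≤ K + 1 - 1 - ((0 : Fin (K+1)) : ℕ)
      have h := hmax' u w
      have hv : ((0 : Fin (K+1)) : ℕ) = 0 := rfl
      have h1 : n = 0 ∨ 1 ≤ Nat.sqrt n := by
        rcases Nat.eq_zero_or_pos n with h0 | h0
        · exact Or.inl h0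
        · exact Or.inr (Nat.le_sqrt.mpr (by omega))
      omega
    · have hK2 : 2 ≤ K := by
        have : 1 ≤ Nat.sqrt n := Nat.le_sqrt.mpr (by omega)
        omega
      have hKn : K ≤ n := by
        have := Nat.sqrt_lt_self (show 1 < n by omega)
        omega
      have hnK : n < K*K := by rw [← hKdef]; exact Nat.lt_succ_sqrt n
      have hs : (K-1)*(K-1) ≤ n := by
        have h := Nat.sqrt_le n
        rw [← hKdef]
        simpa using h
      have hpadj : ∀ j, j < n → G.Adj (p.getVert j) (p.getVert (j+1)) := by
        intro j hj
        exact p.adj_getVert_succ (by omega)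
      have hd02 := hdist 0 2 (by omega) (by omega)
      have hne02 : p.getVert 0 ≠ p.getVert 2 := by
        intro h
        rw [h, SimpleGraph.dist_self] at hd02
        omega
      have hnadj : ¬ G.Adj (p.getVert 0) (p.getVert 2) := by
        intro h
        have := SimpleGraph.dist_eq_one_iff_adj.mpr h
        omega
      have hdisj : hi (p.getVert 0) < lo (p.getVert 2) ∨ hi (p.getVert 2) < lo (p.getVert 0) := by
        by_contra hcon
        push_neg at hcon
        exact hnadj ((hadj _ _).mpr ⟨hne02, hcon.2, hcon.1⟩)
      rcases hdisj with hdir | hdir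
      · exact main_construct G lo hi hint hadj hconn n K h3 hK2 hKn hnK hs p.getVert hpadj
          hdist hmax' hdir
      · refine main_construct G (fun z => -hi z) (fun z => -lo z)
          (fun z => by simpa using hint z) (fun a b => ?_) hconn n K h3 hK2 hKn hnK hs
          p.getVert hpadj hdist hmax' (by simpa using hdir)
        rw [hadj a b]
        constructor
        · rintro ⟨hne, hl, hr⟩
          exact ⟨hne, by simpa using hr, by simpa using hl⟩
        · rintro ⟨hne, hl, hr⟩
          exact ⟨hne, by simpa using hr, by simpa using hl⟩
  exact ⟨le_trans hpath_le hK_G, le_trans hG_le (by omega)⟩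
end

section
/- For a graph that is a disjoint union of spider graphs SP(d_1, 0), SP(d_2, 1), ..., SP(d_k, k-1) with d_i >= i+1 for each i, the burning number equals k. -/
/-- The disjoint union of an indexed family of graphs. -/
def sigmaGraph {ι : Type*} {V : ι → Type*} (G : ∀ i, SimpleGraph (V i)) :
    SimpleGraph (Σ i, V i) where
  Adj u v := ∃ h : u.1 = v.1, (G v.1).Adj (h ▸ u.2) v.2
  symm := by
    constructor
    rintro ⟨i, a⟩ ⟨j, b⟩ ⟨h, hadj⟩
    dsimp only at h
    subst h
    exact ⟨rfl, hadj.symm⟩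
  loopless := by
    constructor
    rintro ⟨i, a⟩ ⟨h, hadj⟩
    exact (G i).irrefl hadj


lemma sigma_reachable_fst {ι : Type*} {V : ι → Type*} (G : ∀ i, SimpleGraph (V i))
    {u v : Σ i, V i} (h : (sigmaGraph G).Reachable u v) : u.1 = v.1 := by
  obtain ⟨w⟩ := h
  induction w with
  | nil => rfl
  | cons h _ ih => obtain ⟨he, -⟩ := h; exact he.trans ih

def sigmaInc {ι : Type*} {V : ι → Type*} (G : ∀ i, SimpleGraph (V i)) (i : ι) :
    G i →g sigmaGraph G where
  toFun := Sigma.mk i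
  map_rel' := fun h => ⟨rfl, h⟩

lemma spider_head_adj {s r : ℕ} (a : Fin s) (j : Fin r) (hj : (j : ℕ) = 0) :
    (spider s r).Adj none (some (a, j)) := by
  exact ⟨by simp, Or.inl (Or.inl ⟨a, j, rfl, rfl, hj⟩)⟩

lemma spider_step_adj {s r : ℕ} (a : Fin s) (j j' : Fin r) (h : (j' : ℕ) = (j : ℕ) + 1) :
    (spider s r).Adj (some (a, j)) (some (a, j')) := by
  refine ⟨?_, Or.inl (Or.inr ⟨a, j, j', rfl, rfl, h⟩)⟩
  intro e
  rw [Option.some_inj, Prod.mk.injEq] at e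
  have := congrArg Fin.val e.2
  omega

lemma spider_walk_arm {s r : ℕ} (a : Fin s) :
    ∀ (n : ℕ) (hn : n < r),
      ∃ w : (spider s r).Walk none (some (a, ⟨n, hn⟩)), w.length = n + 1 := by
  intro n
  induction n with
  | zero => exact fun hn => ⟨SimpleGraph.Walk.cons (spider_head_adj a ⟨0, hn⟩ rfl)
      SimpleGraph.Walk.nil, rfl⟩
  | succ m ih =>
    intro hn
    obtain ⟨w, hw⟩ := ih (Nat.lt_of_succ_lt hn)
    refine ⟨w.concat (spider_step_adj a ⟨m, Nat.lt_of_succ_lt hn⟩ ⟨m + 1, hn⟩ rfl), ?_⟩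
    simp [SimpleGraph.Walk.length_concat, hw]

lemma spider_walk {s r : ℕ} (v : Option (Fin s × Fin r)) :
    ∃ w : (spider s r).Walk none v, w.length ≤ r := by
  match v with
  | none => exact ⟨SimpleGraph.Walk.nil, Nat.zero_le r⟩
  | some (a, j) =>
    obtain ⟨w, hw⟩ := spider_walk_arm a (j : ℕ) j.isLt
    exact ⟨(by simpa using w), by simp [hw]⟩

/-- For the disjoint union of spider graphs `SP(d 1, 0) ∪ SP(d 2, 1) ∪ ⋯ ∪ SP(d k, k-1)`
(0-indexed: the `i`-th component is `SP(d i, i)` with `d i ≥ i + 2`), the burning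
number equals `k`. -/
theorem burningNumber_spider_union (k : ℕ) (d : Fin k → ℕ)
    (hd : ∀ i : Fin k, (i : ℕ) + 2 ≤ d i) :
    burningNumber (sigmaGraph (fun i : Fin k => spider (d i) (i : ℕ))) = k := by
  set G := sigmaGraph (fun i : Fin k => spider (d i) (i : ℕ)) with hG
  have hmem : k ∈ {m : ℕ | ∃ x : Fin m → (Σ i : Fin k, Option (Fin (d i) × Fin (i : ℕ))),
      burnsBy G x} := by
    refine ⟨fun j => ⟨j.rev, none⟩, ?_⟩
    rintro ⟨i, w⟩
    refine ⟨i.rev, ?_⟩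
    have hrev : i.rev.rev = i := Fin.rev_rev i
    have hx : (⟨i.rev.rev, none⟩ : Σ i : Fin k, Option (Fin (d i) × Fin (i : ℕ)))
        = ⟨i, none⟩ := by rw [hrev]
    obtain ⟨p, hp⟩ := spider_walk (s := d i) (r := (i : ℕ)) w
    have hlen : ∀ q : (spider (d i) (i : ℕ)).Walk none w,
        ∃ q' : G.Walk (⟨i, none⟩ : Σ i : Fin k, Option (Fin (d i) × Fin (i : ℕ))) ⟨i, w⟩,
          q'.length = q.length := by
      intro q
      exact ⟨q.map (sigmaInc (fun i : Fin k => spider (d i) (i : ℕ)) i),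
        SimpleGraph.Walk.length_map _ _⟩
    obtain ⟨q', hq'⟩ := hlen p
    constructor
    · show G.Reachable ⟨i.rev.rev, none⟩ ⟨i, w⟩
      rw [hx]; exact ⟨q'⟩
    · show G.dist ⟨i.rev.rev, none⟩ ⟨i, w⟩ ≤ k - 1 - (i.rev : ℕ)
      rw [hx]
      calc G.dist ⟨i, none⟩ ⟨i, w⟩ ≤ q'.length := SimpleGraph.dist_le q'
        _ ≤ (i : ℕ) := by omega
        _ ≤ k - 1 - (i.rev : ℕ) := by
            have := i.isLt
            have : (i.rev : ℕ) = k - ((i : ℕ) + 1) := Fin.val_rev i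
            omega
  apply le_antisymm
  · exact Nat.sInf_le hmem
  · refine le_csInf ⟨k, hmem⟩ ?_
    rintro m ⟨x, hx⟩
    have hsurj : Function.Surjective (fun j : Fin m => (x j).1) := by
      intro i
      obtain ⟨j, hr, -⟩ := hx ⟨i, none⟩
      exact ⟨j, sigma_reachable_fst _ hr⟩
    simpa using Fintype.card_le_of_surjective _ hsurj
end
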